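/- Let γ > 0, let Z = (X,Y,Â,B̂,Ĉ,D̂,Π,Ξ) ∈ G_γ and let T ∈ ℝ^{n_x×n_x} be invertible. Define Ẑ := (X,Y,Â,B̂,Ĉ,D̂, TΠ, ΞT⁻¹). Then Ẑ ∈ G_γ and Φ(Ẑ) = 𝒯_T(Φ(Z)). -/

import Mathlib

open Matrix

noncomputable section

/-- Operator norm (largest singular value) of a complex matrix. -/
def matOpNorm {m n : ℕ} (M : Matrix (Fin m) (Fin n) ℂ) : ℝ :=
  ‖(Matrix.toEuclideanLin M).toContinuousLinearMap‖

/-- A real square matrix is Hurwitz if all its eigenvalues (over ℂ) have negative real part. -/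
def IsHurwitz {n : Type*} [Fintype n] [DecidableEq n] (M : Matrix n n ℝ) : Prop :=
  ∀ μ ∈ spectrum ℂ (M.map (Complex.ofReal ·)), μ.re < 0

/-- The plant data. -/
structure Plant (nx nu ny nw nz : ℕ) where
  A : Matrix (Fin nx) (Fin nx) ℝ
  B1 : Matrix (Fin nx) (Fin nw) ℝ
  B2 : Matrix (Fin nx) (Fin nu) ℝ
  C1 : Matrix (Fin nz) (Fin nx) ℝ
  C2 : Matrix (Fin ny) (Fin nx) ℝ
  D11 : Matrix (Fin nz) (Fin nw) ℝ
  D12 : Matrix (Fin nz) (Fin nu) ℝ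
  D21 : Matrix (Fin ny) (Fin nw) ℝ

namespace Plant

variable {nx nu ny nw nz : ℕ} (P : Plant nx nu ny nw nz)

/-- Closed-loop `A` matrix. -/
def Acl (K : Matrix (Fin nu ⊕ Fin nx) (Fin ny ⊕ Fin nx) ℝ) :
    Matrix (Fin nx ⊕ Fin nx) (Fin nx ⊕ Fin nx) ℝ :=
  fromBlocks (P.A + P.B2 * K.toBlocks₁₁ * P.C2) (P.B2 * K.toBlocks₁₂)
    (K.toBlocks₂₁ * P.C2) K.toBlocks₂₂

/-- Closed-loop `B` matrix. -/
def Bcl (K : Matrix (Fin nu ⊕ Fin nx) (Fin ny ⊕ Fin nx) ℝ) :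
    Matrix (Fin nx ⊕ Fin nx) (Fin nw) ℝ :=
  fromRows (P.B1 + P.B2 * K.toBlocks₁₁ * P.D21) (K.toBlocks₂₁ * P.D21)

/-- Closed-loop `C` matrix. -/
def Ccl (K : Matrix (Fin nu ⊕ Fin nx) (Fin ny ⊕ Fin nx) ℝ) :
    Matrix (Fin nz) (Fin nx ⊕ Fin nx) ℝ :=
  fromCols (P.C1 + P.D12 * K.toBlocks₁₁ * P.C2) (P.D12 * K.toBlocks₁₂)

/-- Closed-loop `D` matrix. -/
def Dcl (K : Matrix (Fin nu ⊕ Fin nx) (Fin ny ⊕ Fin nx) ℝ) :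
    Matrix (Fin nz) (Fin nw) ℝ :=
  P.D11 + P.D12 * K.toBlocks₁₁ * P.D21

/-- The set of stabilizing full-order dynamic output feedback controllers. -/
def Cstab : Set (Matrix (Fin nu ⊕ Fin nx) (Fin ny ⊕ Fin nx) ℝ) :=
  {K | IsHurwitz (P.Acl K)}

/-- Closed-loop transfer matrix at frequency `s = iω`. -/
def transferAt (K : Matrix (Fin nu ⊕ Fin nx) (Fin ny ⊕ Fin nx) ℝ) (ω : ℝ) :
    Matrix (Fin nz) (Fin nw) ℂ :=
  (P.Ccl K).map (Complex.ofReal ·) *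
    (((Complex.I * (ω : ℂ)) • (1 : Matrix (Fin nx ⊕ Fin nx) (Fin nx ⊕ Fin nx) ℂ)
        - (P.Acl K).map (Complex.ofReal ·))⁻¹) *
    (P.Bcl K).map (Complex.ofReal ·) + (P.Dcl K).map (Complex.ofReal ·)

/-- Closed-loop H∞ norm. -/
def hinfNorm (K : Matrix (Fin nu ⊕ Fin nx) (Fin ny ⊕ Fin nx) ℝ) : ℝ :=
  ⨆ ω : ℝ, matOpNorm (P.transferAt K ω)

/-- The feasible set `K_γ`. -/
def Kset (γ : ℝ) : Set (Matrix (Fin nu ⊕ Fin nx) (Fin ny ⊕ Fin nx) ℝ) :=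
  {K | K ∈ P.Cstab ∧ P.hinfNorm K < γ}

end Plant

/-- The similarity transformation `𝒯_T` on full-order controllers. -/
def simT {nx nu ny : ℕ} (T : Matrix (Fin nx) (Fin nx) ℝ)
    (K : Matrix (Fin nu ⊕ Fin nx) (Fin ny ⊕ Fin nx) ℝ) :
    Matrix (Fin nu ⊕ Fin nx) (Fin ny ⊕ Fin nx) ℝ :=
  fromBlocks K.toBlocks₁₁ (K.toBlocks₁₂ * T⁻¹) (T * K.toBlocks₂₁) (T * K.toBlocks₂₂ * T⁻¹)

/-- The symmetric block matrix `M_γ(X, Y, Â, B̂, Ĉ, D̂)` from the change of variables in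
`H∞` synthesis. -/
def Mγmat {nx nu ny nw nz : ℕ} (P : Plant nx nu ny nw nz) (γ : ℝ)
    (X Y Ah : Matrix (Fin nx) (Fin nx) ℝ) (Bh : Matrix (Fin nx) (Fin ny) ℝ)
    (Ch : Matrix (Fin nu) (Fin nx) ℝ) (Dh : Matrix (Fin nu) (Fin ny) ℝ) :
    Matrix ((Fin nx ⊕ Fin nx) ⊕ (Fin nw ⊕ Fin nz)) ((Fin nx ⊕ Fin nx) ⊕ (Fin nw ⊕ Fin nz)) ℝ :=
  let M11 := P.A * X + X * P.Aᵀ + P.B2 * Ch + (P.B2 * Ch)ᵀ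
  let M12 := Ahᵀ + (P.A + P.B2 * Dh * P.C2)
  let M13 := P.B1 + P.B2 * Dh * P.D21
  let M14 := (P.C1 * X + P.D12 * Ch)ᵀ
  let M22 := P.Aᵀ * Y + Y * P.A + Bh * P.C2 + (Bh * P.C2)ᵀ
  let M23 := Y * P.B1 + Bh * P.D21
  let M24 := (P.C1 + P.D12 * Dh * P.C2)ᵀ
  let M34 := (P.D11 + P.D12 * Dh * P.D21)ᵀ
  fromBlocks (fromBlocks M11 M12 M12ᵀ M22) (fromBlocks M13 M14 M23 M24)
    (fromBlocks M13ᵀ M23ᵀ M14ᵀ M24ᵀ)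
    (fromBlocks ((-γ) • (1 : Matrix (Fin nw) (Fin nw) ℝ)) M34 M34ᵀ
      ((-γ) • (1 : Matrix (Fin nz) (Fin nz) ℝ)))

/-- The tuple `(X, Y, Â, B̂, Ĉ, D̂)` of decision variables of the LMI. -/
abbrev FTuple (nx nu ny : ℕ) : Type :=
  Matrix (Fin nx) (Fin nx) ℝ × Matrix (Fin nx) (Fin nx) ℝ × Matrix (Fin nx) (Fin nx) ℝ ×
    Matrix (Fin nx) (Fin ny) ℝ × Matrix (Fin nu) (Fin nx) ℝ × Matrix (Fin nu) (Fin ny) ℝ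

/-- The tuple `(X, Y, Â, B̂, Ĉ, D̂, Π, Ξ)`. -/
abbrev GTuple (nx nu ny : ℕ) : Type :=
  FTuple nx nu ny × Matrix (Fin nx) (Fin nx) ℝ × Matrix (Fin nx) (Fin nx) ℝ

/-- The convex set `F_γ`: tuples `(X, Y, Â, B̂, Ĉ, D̂)` with `X, Y` symmetric,
`[[X, I],[I, Y]] ≻ 0` and `M_γ(X,Y,Â,B̂,Ĉ,D̂) ≺ 0`. -/
def Fset {nx nu ny nw nz : ℕ} (P : Plant nx nu ny nw nz) (γ : ℝ) : Set (FTuple nx nu ny) :=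
  {W | W.1.IsSymm ∧ W.2.1.IsSymm ∧
    (fromBlocks W.1 (1 : Matrix (Fin nx) (Fin nx) ℝ) 1 W.2.1).PosDef ∧
    (-(Mγmat P γ W.1 W.2.1 W.2.2.1 W.2.2.2.1 W.2.2.2.2.1 W.2.2.2.2.2)).PosDef}

/-- The set `G_γ`: tuples `(X, Y, Â, B̂, Ĉ, D̂, Π, Ξ)` with `(X,…,D̂) ∈ F_γ` and
`Ξ·Π = I − YX`. -/
def Gset {nx nu ny nw nz : ℕ} (P : Plant nx nu ny nw nz) (γ : ℝ) : Set (GTuple nx nu ny) :=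
  {Z | Z.1 ∈ Fset P γ ∧ Z.2.2 * Z.2.1 = 1 - Z.1.2.1 * Z.1.1}

/-- The controller-reconstruction map `Φ`. -/
def Phi {nx nu ny nw nz : ℕ} (P : Plant nx nu ny nw nz) (Z : GTuple nx nu ny) :
    Matrix (Fin nu ⊕ Fin nx) (Fin ny ⊕ Fin nx) ℝ :=
  match Z with
  | ((X, Y, Ah, Bh, Ch, Dh), Pm, Ξ) =>
    (fromBlocks (1 : Matrix (Fin nu) (Fin nu) ℝ) 0 (Y * P.B2) Ξ)⁻¹ *
      fromBlocks Dh Ch Bh (Ah - Y * P.A * X) *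
      (fromBlocks (1 : Matrix (Fin ny) (Fin ny) ℝ) (P.C2 * X) 0 Pm)⁻¹

/-!
Rescaling `Π ↦ TΠ`, `Ξ ↦ ΞT⁻¹` leaves the product `ΞΠ`, hence membership in `G_γ`, unchanged.
In `Φ`, the left factor becomes `[[I, 0], [YB₂, Ξ]] · diag(I, T⁻¹)` and the right factor
`diag(I, T) · [[I, C₂X], [0, Π]]`, so inverting pulls out `diag(I, T)` on the left and
`diag(I, T⁻¹)` on the right of `Φ(Z)`, which is exactly the action of `𝒯_T`.
-/

theorem inv_fromBlocks_one_zero_zero {l m α : Type*} [Fintype l] [Fintype m] [DecidableEq l]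
    [DecidableEq m] [CommRing α] {T : Matrix l l α} (hT : IsUnit T.det) :
    (fromBlocks (1 : Matrix m m α) 0 0 T)⁻¹ = fromBlocks 1 0 0 T⁻¹ := by
  have hunits : IsUnit (1 : Matrix m m α) ↔ IsUnit T :=
    iff_of_true isUnit_one ((isUnit_iff_isUnit_det T).mpr hT)
  rw [inv_fromBlocks_zero₂₁_of_isUnit_iff _ _ _ hunits]
  simp

theorem fromBlocks_one_zero_zero_mul_mul {l m n α : Type*} [Fintype l] [Fintype m] [Fintype n]
    [DecidableEq m] [DecidableEq n] [Semiring α] (S U : Matrix l l α)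
    (K : Matrix (m ⊕ l) (n ⊕ l) α) :
    fromBlocks (1 : Matrix m m α) 0 0 S * K * fromBlocks (1 : Matrix n n α) 0 0 U =
      fromBlocks K.toBlocks₁₁ (K.toBlocks₁₂ * U) (S * K.toBlocks₂₁) (S * K.toBlocks₂₂ * U) := by
  conv_lhs => rw [← fromBlocks_toBlocks K]
  simp [fromBlocks_multiply, Matrix.mul_assoc]

theorem simT_eq_fromBlocks_mul_mul {nx nu ny : ℕ} (T : Matrix (Fin nx) (Fin nx) ℝ)
    (K : Matrix (Fin nu ⊕ Fin nx) (Fin ny ⊕ Fin nx) ℝ) :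
    simT T K = fromBlocks (1 : Matrix (Fin nu) (Fin nu) ℝ) 0 0 T * K *
      fromBlocks (1 : Matrix (Fin ny) (Fin ny) ℝ) 0 0 T⁻¹ :=
  (fromBlocks_one_zero_zero_mul_mul T T⁻¹ K).symm

theorem Phi_rescale {nx nu ny nw nz : ℕ} (P : Plant nx nu ny nw nz) (W : FTuple nx nu ny)
    (Pm Ξ : Matrix (Fin nx) (Fin nx) ℝ) {T : Matrix (Fin nx) (Fin nx) ℝ} (hT : IsUnit T.det) :
    Phi P (W, T * Pm, Ξ * T⁻¹) = fromBlocks (1 : Matrix (Fin nu) (Fin nu) ℝ) 0 0 T *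
      Phi P (W, Pm, Ξ) * fromBlocks (1 : Matrix (Fin ny) (Fin ny) ℝ) 0 0 T⁻¹ := by
  obtain ⟨X, Y, Ah, Bh, Ch, Dh⟩ := W
  have hleft : fromBlocks (1 : Matrix (Fin nu) (Fin nu) ℝ) 0 (Y * P.B2) (Ξ * T⁻¹) =
      fromBlocks 1 0 (Y * P.B2) Ξ * fromBlocks (1 : Matrix (Fin nu) (Fin nu) ℝ) 0 0 T⁻¹ := by
    simp [fromBlocks_multiply]
  have hright : fromBlocks (1 : Matrix (Fin ny) (Fin ny) ℝ) (P.C2 * X) 0 (T * Pm) =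
      fromBlocks (1 : Matrix (Fin ny) (Fin ny) ℝ) 0 0 T * fromBlocks 1 (P.C2 * X) 0 Pm := by
    simp [fromBlocks_multiply]
  have hTinv : IsUnit T⁻¹.det := isUnit_nonsing_inv_det_iff.mpr hT
  simp only [Phi, hleft, hright, Matrix.mul_inv_rev, inv_fromBlocks_one_zero_zero hT,
    inv_fromBlocks_one_zero_zero hTinv, nonsing_inv_nonsing_inv T hT, Matrix.mul_assoc]

theorem Gset_simT_equivariant_general {nx nu ny nw nz : ℕ} (P : Plant nx nu ny nw nz)
    (γ : ℝ) (Z : GTuple nx nu ny) (hZ : Z ∈ Gset P γ)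
    (T : Matrix (Fin nx) (Fin nx) ℝ) (hT : IsUnit T.det) :
    let Zhat : GTuple nx nu ny := (Z.1, T * Z.2.1, Z.2.2 * T⁻¹)
    Zhat ∈ Gset P γ ∧ Phi P Zhat = simT T (Phi P Z) := by
  obtain ⟨W, Pm, Ξ⟩ := Z
  obtain ⟨hF, hprod⟩ := hZ
  refine ⟨⟨hF, ?_⟩, ?_⟩
  · calc Ξ * T⁻¹ * (T * Pm) = Ξ * (T⁻¹ * T) * Pm := by simp only [Matrix.mul_assoc]
      _ = 1 - W.2.1 * W.1 := by rw [nonsing_inv_mul T hT, Matrix.mul_one, hprod]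
  · rw [Phi_rescale P W Pm Ξ hT, simT_eq_fromBlocks_mul_mul]

/-- If `Z = (X,Y,Â,B̂,Ĉ,D̂,Π,Ξ) ∈ G_γ` and `T` is invertible, then
`Ẑ = (X,Y,Â,B̂,Ĉ,D̂, TΠ, ΞT⁻¹) ∈ G_γ` and `Φ(Ẑ) = 𝒯_T(Φ(Z))`. -/
theorem Gset_simT_equivariant {nx nu ny nw nz : ℕ} (hnx : 0 < nx) (hnu : 0 < nu)
    (hny : 0 < ny) (hnw : 0 < nw) (hnz : 0 < nz) (P : Plant nx nu ny nw nz)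
    (γ : ℝ) (hγ : 0 < γ) (Z : GTuple nx nu ny) (hZ : Z ∈ Gset P γ)
    (T : Matrix (Fin nx) (Fin nx) ℝ) (hT : IsUnit T.det) :
    let Zhat : GTuple nx nu ny := (Z.1, T * Z.2.1, Z.2.2 * T⁻¹)
    Zhat ∈ Gset P γ ∧ Phi P Zhat = simT T (Phi P Z) :=
  Gset_simT_equivariant_general P γ Z hZ T hT
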